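/- Let Ê, E and F be closed subspaces of a complex Hilbert space H with Ê ≠ {0} and E ≠ {0}. Then cos∠(Ê,F) ≥ 1 − sin∠(E,F) − sin∠(Ê,E). -/

import Mathlib

/-!
Write `a - Q_F a` for a unit vector `a ∈ Ê` as `(I - Q_F) Q_E a + (I - Q_F)(a - Q_E a)`. The first term has
norm at most `sin∠(E,F)` and the second at most `‖a - Q_E a‖ ≤ sin∠(Ê,E)`, so `sin∠(Ê,F) ≤ sin∠(E,F) + sin∠(Ê,E)`.
The theorem follows from `‖Q_F a‖ ≥ 1 - ‖a - Q_F a‖ ≥ 1 - sin∠(Ê,F)`.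
-/

/-- `cos∠(A,B) := inf{‖Q_B a‖ : a ∈ A, ‖a‖ = 1}`. -/
noncomputable def cosAngle {H : Type*} [NormedAddCommGroup H] [InnerProductSpace ℂ H]
    (A B : Submodule ℂ H) [CompleteSpace B] : ℝ :=
  sInf ((fun a => ‖(B.orthogonalProjectionOnto a : H)‖) '' {a : H | a ∈ A ∧ ‖a‖ = 1})

/-- `sin∠(A,B) := sup{‖a − Q_B a‖ : a ∈ A, ‖a‖ = 1}`. -/
noncomputable def sinAngle {H : Type*} [NormedAddCommGroup H] [InnerProductSpace ℂ H]
    (A B : Submodule ℂ H) [CompleteSpace B] : ℝ :=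
  sSup ((fun a => ‖a - (B.orthogonalProjectionOnto a : H)‖) '' {a : H | a ∈ A ∧ ‖a‖ = 1})

open Submodule

lemma sub_orthogonalProjectionOnto_eq_starProjection_orthogonal {𝕜 H : Type*} [RCLike 𝕜]
    [NormedAddCommGroup H] [InnerProductSpace 𝕜 H] (B : Submodule 𝕜 H)
    [B.HasOrthogonalProjection] (v : H) :
    v - (B.orthogonalProjectionOnto v : H) = Bᗮ.starProjection v :=
  (starProjection_orthogonal_val v).symm

section Angles

variable {H : Type*} [NormedAddCommGroup H] [InnerProductSpace ℂ H]

lemma bddAbove_sinAngle_set (A B : Submodule ℂ H) [CompleteSpace B] :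
    BddAbove ((fun a => ‖a - (B.orthogonalProjectionOnto a : H)‖) ''
      {a : H | a ∈ A ∧ ‖a‖ = 1}) := by
  refine ⟨1, ?_⟩
  rintro _ ⟨a, ⟨-, ha⟩, rfl⟩
  dsimp only
  rw [sub_orthogonalProjectionOnto_eq_starProjection_orthogonal, ← ha]
  exact norm_starProjection_apply_le _ a

lemma norm_sub_orthogonalProjectionOnto_le_sinAngle {A : Submodule ℂ H} (B : Submodule ℂ H)
    [CompleteSpace B] {a : H} (ha : a ∈ A) (hunit : ‖a‖ = 1) :
    ‖a - (B.orthogonalProjectionOnto a : H)‖ ≤ sinAngle A B :=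
  le_csSup (bddAbove_sinAngle_set A B) ⟨a, ⟨ha, hunit⟩, rfl⟩

lemma sinAngle_nonneg (A B : Submodule ℂ H) [CompleteSpace B] : 0 ≤ sinAngle A B :=
  Real.sSup_nonneg fun _ ⟨_, _, hx⟩ => hx ▸ norm_nonneg _

lemma norm_sub_orthogonalProjectionOnto_le_sinAngle_mul {A : Submodule ℂ H}
    (B : Submodule ℂ H) [CompleteSpace B] {a : H} (ha : a ∈ A) :
    ‖a - (B.orthogonalProjectionOnto a : H)‖ ≤ sinAngle A B * ‖a‖ := by
  rcases eq_or_ne a 0 with rfl | ha0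
  · simp
  have hpos : 0 < ‖a‖ := norm_pos_iff.mpr ha0
  have hle := norm_sub_orthogonalProjectionOnto_le_sinAngle B (A.smul_mem (‖a‖⁻¹ : ℂ) ha)
    (by simp [norm_smul, hpos.ne'])
  rw [sub_orthogonalProjectionOnto_eq_starProjection_orthogonal, map_smul, norm_smul] at hle
  rw [sub_orthogonalProjectionOnto_eq_starProjection_orthogonal]
  simpa [inv_mul_le_iff₀ hpos, mul_comm] using hle

lemma sinAngle_le_sinAngle_add_sinAngle (A E F : Submodule ℂ H) [CompleteSpace E]
    [CompleteSpace F] : sinAngle A F ≤ sinAngle E F + sinAngle A E := by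
  refine Real.sSup_le ?_ (add_nonneg (sinAngle_nonneg E F) (sinAngle_nonneg A E))
  rintro _ ⟨a, ⟨haA, ha⟩, rfl⟩
  set b : H := E.starProjection a
  have hb : ‖Fᗮ.starProjection b‖ ≤ sinAngle E F := by
    calc ‖Fᗮ.starProjection b‖ ≤ sinAngle E F * ‖b‖ := by
          rw [← sub_orthogonalProjectionOnto_eq_starProjection_orthogonal]
          exact norm_sub_orthogonalProjectionOnto_le_sinAngle_mul F (E.starProjection_apply_mem a)
      _ ≤ sinAngle E F * 1 := by
          gcongr
          · exact sinAngle_nonneg E F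
          · exact ha ▸ norm_starProjection_apply_le E a
      _ = sinAngle E F := mul_one _
  have hab : ‖Fᗮ.starProjection (a - b)‖ ≤ sinAngle A E :=
    calc ‖Fᗮ.starProjection (a - b)‖ ≤ ‖a - b‖ := norm_starProjection_apply_le _ _
      _ ≤ sinAngle A E * ‖a‖ := norm_sub_orthogonalProjectionOnto_le_sinAngle_mul E haA
      _ = sinAngle A E := by rw [ha, mul_one]
  calc ‖a - (F.orthogonalProjectionOnto a : H)‖
      = ‖Fᗮ.starProjection b + Fᗮ.starProjection (a - b)‖ := by
        rw [sub_orthogonalProjectionOnto_eq_starProjection_orthogonal, ← map_add,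
          add_sub_cancel]
    _ ≤ sinAngle E F + sinAngle A E := (norm_add_le _ _).trans (add_le_add hb hab)

lemma one_sub_sinAngle_le_cosAngle {A : Submodule ℂ H} (hA : A ≠ ⊥) (B : Submodule ℂ H)
    [CompleteSpace B] : 1 - sinAngle A B ≤ cosAngle A B := by
  obtain ⟨x, hxA, hx0⟩ := exists_mem_ne_zero_of_ne_bot hA
  have hunit : ‖(‖x‖⁻¹ : ℂ) • x‖ = 1 := by simp [norm_smul, norm_ne_zero_iff.mpr hx0]
  refine le_csInf ⟨_, ⟨(‖x‖⁻¹ : ℂ) • x, ⟨A.smul_mem _ hxA, hunit⟩, rfl⟩⟩ ?_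
  rintro _ ⟨a, ⟨haA, ha⟩, rfl⟩
  have hsin := norm_sub_orthogonalProjectionOnto_le_sinAngle B haA ha
  have htri := norm_sub_norm_le a (a - (B.orthogonalProjectionOnto a : H))
  rw [sub_sub_cancel, ha] at htri
  linarith

end Angles

theorem stmt_6_general {H : Type*} [NormedAddCommGroup H] [InnerProductSpace ℂ H]
    (Ehat E F : Submodule ℂ H) [CompleteSpace E] [CompleteSpace F]
    (hEhat : Ehat ≠ ⊥) :
    1 - sinAngle E F - sinAngle Ehat E ≤ cosAngle Ehat F := by
  linarith [one_sub_sinAngle_le_cosAngle hEhat F, sinAngle_le_sinAngle_add_sinAngle Ehat E F]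

/-- `cos∠(Ê,F) ≥ 1 − sin∠(E,F) − sin∠(Ê,E)`. -/
theorem stmt_6 {H : Type*} [NormedAddCommGroup H] [InnerProductSpace ℂ H] [CompleteSpace H]
    (Ehat E F : Submodule ℂ H) [CompleteSpace E] [CompleteSpace F]
    (hEhat : Ehat ≠ ⊥) (hE : E ≠ ⊥) :
    1 - sinAngle E F - sinAngle Ehat E ≤ cosAngle Ehat F :=
  stmt_6_general Ehat E F hEhat
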